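/- Let l > 0, γ ∈ ℝ, N ≥ 2 an integer, and a₁, …, a_N ∈ ℝ. With e_k(x) = √(2/l)·sin(kπx/l) and u(x) := Σ_{k=1}^N a_k e_k(x), one has ∫_0^l (−γ) u(x) u′(x) e₁(x) dx = (γπ/(√2 · l^{3/2})) · Σ_{j=1}^{N−1} a_j a_{j+1}. -/

import Mathlib

/-!
Writing `θ = π x / l`, the integrand `u u' e₁` is a double sum of the products
`sin (j θ) cos (k θ) sin θ`, weighted by `a_j a_k k`. Product-to-sum turns each product into
four cosines `cos (n θ)`, whose integrals over `(0, l)` vanish unless `n = 0`; for `j, k ≥ 1`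
only the adjacent pairs `j = k ± 1` survive, with weight `± l / 4`. The weight `k` coming from
the derivative then leaves `k - (k + 1) = -1` for each adjacent pair.
-/

open MeasureTheory Real intervalIntegral Finset

theorem integral_cos_int_mul_pi_div {l : ℝ} (hl : l ≠ 0) (n : ℤ) :
    ∫ x in (0:ℝ)..l, cos (n * π * x / l) = if n = 0 then l else 0 := by
  split_ifs with hn
  · simp [hn]
  · have hω : (n * π / l : ℝ) ≠ 0 := by positivity
    have h_lin (x : ℝ) : n * π * x / l = n * π / l * x := by ring
    simp_rw [h_lin]
    rw [integral_comp_mul_left cos hω, integral_cos, div_mul_cancel₀ _ hl]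
    simp [sin_int_mul_pi]

theorem sin_mul_cos_mul_sin (p q r : ℝ) : sin p * cos q * sin r =
    (cos (p - r - q) + cos (p - r + q) - cos (p + r - q) - cos (p + r + q)) / 4 := by
  simp only [cos_sub, cos_add, sin_sub, sin_add]; ring

theorem integral_sin_mul_cos_mul_sin {l : ℝ} (hl : l ≠ 0) {j k : ℕ} (hj : 0 < j) (hk : 0 < k) :
    ∫ x in (0:ℝ)..l, sin (j * π * x / l) * cos (k * π * x / l) * sin (π * x / l)
      = l / 4 * ((if j = k + 1 then 1 else 0) - (if k = j + 1 then 1 else 0)) := by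
  have h_sum (x : ℝ) : sin (j * π * x / l) * cos (k * π * x / l) * sin (π * x / l) =
      (cos (((j - 1 - k : ℤ) : ℝ) * π * x / l) + cos (((j - 1 + k : ℤ) : ℝ) * π * x / l)
        - cos (((j + 1 - k : ℤ) : ℝ) * π * x / l) - cos (((j + 1 + k : ℤ) : ℝ) * π * x / l)) / 4 := by
    rw [sin_mul_cos_mul_sin]; push_cast; ring_nf
  have h_int (n : ℤ) : IntervalIntegrable (fun x => cos (n * π * x / l)) volume 0 l :=
    (by fun_prop : Continuous _).intervalIntegrable _ _
  simp_rw [h_sum]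
  rw [intervalIntegral.integral_div,
    integral_sub (((h_int _).add (h_int _)).sub (h_int _)) (h_int _),
    integral_sub ((h_int _).add (h_int _)) (h_int _), integral_add (h_int _) (h_int _)]
  simp only [integral_cos_int_mul_pi_div hl]
  split_ifs <;> first | omega | ring

theorem integral_sum_sin_mul_sum_cos_mul_sin {l : ℝ} (hl : l ≠ 0) {s : Finset ℕ}
    (hs : ∀ k ∈ s, 0 < k) (b c : ℕ → ℝ) :
    ∫ x in (0:ℝ)..l, (∑ j ∈ s, b j * sin (j * π * x / l)) * (∑ k ∈ s, c k * cos (k * π * x / l))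
        * sin (π * x / l)
      = l / 4 * ∑ j ∈ s, ∑ k ∈ s,
          b j * c k * ((if j = k + 1 then 1 else 0) - (if k = j + 1 then 1 else 0)) := by
  have h_expand (x : ℝ) : (∑ j ∈ s, b j * sin (j * π * x / l))
      * (∑ k ∈ s, c k * cos (k * π * x / l)) * sin (π * x / l) = ∑ j ∈ s, ∑ k ∈ s,
        b j * c k * (sin (j * π * x / l) * cos (k * π * x / l) * sin (π * x / l)) := by
    rw [sum_mul_sum]
    simp only [sum_mul]
    exact sum_congr rfl fun j _ => sum_congr rfl fun k _ => by ring
  simp_rw [h_expand]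
  rw [integral_finsetSum fun j _ => (by fun_prop : Continuous _).intervalIntegrable _ _, mul_sum]
  refine sum_congr rfl fun j hj => ?_
  rw [integral_finsetSum fun k _ => (by fun_prop : Continuous _).intervalIntegrable _ _, mul_sum]
  refine sum_congr rfl fun k hk => ?_
  rw [intervalIntegral.integral_const_mul, integral_sin_mul_cos_mul_sin hl (hs j hj) (hs k hk)]
  ring

theorem sum_Icc_sum_Icc_ite_eq_add_one {M : Type*} [AddCommMonoid M] (N : ℕ) (f : ℕ → ℕ → M) :
    ∑ j ∈ Icc 1 N, ∑ k ∈ Icc 1 N, (if j = k + 1 then f j k else 0)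
      = ∑ k ∈ Icc 1 (N - 1), f (k + 1) k := by
  rw [sum_comm]
  simp_rw [sum_ite_eq' (Icc 1 N), ← sum_filter]
  congr 1
  ext k; simp only [mem_filter, mem_Icc]; omega

theorem sum_Icc_sum_Icc_mul_adjacent_sub (N : ℕ) (a : ℕ → ℝ) :
    ∑ j ∈ Icc 1 N, ∑ k ∈ Icc 1 N,
      a j * (a k * k) * ((if j = k + 1 then 1 else 0) - (if k = j + 1 then 1 else 0))
      = -∑ j ∈ Icc 1 (N - 1), a j * a (j + 1) := by
  have h_up := sum_Icc_sum_Icc_ite_eq_add_one N fun j k => a j * (a k * k)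
  have h_down := sum_Icc_sum_Icc_ite_eq_add_one N fun k j => a j * (a k * k)
  rw [sum_comm] at h_down
  simp only [mul_sub, mul_ite, mul_one, mul_zero, sum_sub_distrib, h_up, h_down]
  rw [← sum_sub_distrib, ← sum_neg_distrib]
  exact sum_congr rfl fun k _ => by push_cast; ring

theorem hasDerivAt_sum_mul_sin_mul_pi_div (s : Finset ℕ) (b : ℕ → ℝ) (l x : ℝ) :
    HasDerivAt (fun y => ∑ k ∈ s, b k * sin (k * π * y / l))
      (π / l * ∑ k ∈ s, b k * k * cos (k * π * x / l)) x := by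
  have h_mode (k : ℕ) : HasDerivAt (fun y => sin (k * π * y / l))
      (k * π / l * cos (k * π * x / l)) x := by
    simpa [mul_comm] using (((hasDerivAt_id x).const_mul (k * π)).div_const l).sin
  refine (HasDerivAt.fun_sum fun k _ => (h_mode k).const_mul (b k)).congr_deriv ?_
  rw [mul_sum]
  exact sum_congr rfl fun k _ => by ring

theorem sqrt_two_div_pow_three_mul_pi_div {l : ℝ} (hl : 0 < l) :
    √(2 / l) ^ 3 * (π / l) * (l / 4) = π / (√2 * l ^ ((3:ℝ) / 2)) := by
  have h_rpow : l ^ ((3:ℝ) / 2) = l * √l := by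
    rw [sqrt_eq_rpow, ← rpow_one_add' hl.le (by norm_num)]; norm_num
  have h_sqrt_l : √l ^ 2 = l := sq_sqrt hl.le
  have h_sqrt_two : √2 ^ 2 = 2 := sq_sqrt zero_le_two
  have h_sqrt_l_pos : 0 < √l := sqrt_pos.mpr hl
  rw [h_rpow, sqrt_div zero_le_two]
  field_simp
  linear_combination (l * (√2 ^ 2 + 2)) * h_sqrt_two - 4 * h_sqrt_l

theorem burgers_projection_first_mode_general
    (l γ : ℝ) (hl : 0 < l) (N : ℕ) (a : ℕ → ℝ)
    (e : ℕ → ℝ → ℝ)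
    (he : ∀ k x, e k x = Real.sqrt (2 / l) * Real.sin (k * Real.pi * x / l))
    (u : ℝ → ℝ) (hu : ∀ x, u x = ∑ k ∈ Finset.Icc 1 N, a k * e k x) :
    ∫ x in (0:ℝ)..l, (-γ) * u x * deriv u x * e 1 x
      = (γ * Real.pi / (Real.sqrt 2 * l ^ ((3:ℝ)/2)))
        * ∑ j ∈ Finset.Icc 1 (N - 1), a j * a (j + 1) := by
  have hu_sin : u = fun y => √(2 / l) * ∑ k ∈ Icc 1 N, a k * sin (k * π * y / l) := by
    funext y; simp only [hu, he, mul_sum, mul_left_comm]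
  have h_integrand (x : ℝ) : (-γ) * u x * deriv u x * e 1 x = -γ * √(2 / l) ^ 3 * (π / l) *
      ((∑ j ∈ Icc 1 N, a j * sin (j * π * x / l))
        * (∑ k ∈ Icc 1 N, (a k * k) * cos (k * π * x / l)) * sin (π * x / l)) := by
    rw [hu_sin, ((hasDerivAt_sum_mul_sin_mul_pi_div _ a l x).const_mul _).deriv, he]
    simp only [Nat.cast_one, one_mul]
    ring
  simp_rw [h_integrand]
  rw [intervalIntegral.integral_const_mul,
    integral_sum_sin_mul_sum_cos_mul_sin hl.ne' (fun k hk => (mem_Icc.mp hk).1),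
    sum_Icc_sum_Icc_mul_adjacent_sub, mul_div_assoc, ← sqrt_two_div_pow_three_mul_pi_div hl]
  ring

/-- Projection onto the first mode of the Burgers nonlinearity for a
trigonometric polynomial `u = Σ_{k=1}^N a_k e_k`:
`∫_0^l (-γ) u u′ e₁ dx = (γπ/(√2 l^{3/2})) Σ_{j=1}^{N-1} a_j a_{j+1}`. -/
theorem burgers_projection_first_mode
    (l γ : ℝ) (hl : 0 < l) (N : ℕ) (hN : 2 ≤ N) (a : ℕ → ℝ)
    (e : ℕ → ℝ → ℝ)
    (he : ∀ k x, e k x = Real.sqrt (2 / l) * Real.sin (k * Real.pi * x / l))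
    (u : ℝ → ℝ) (hu : ∀ x, u x = ∑ k ∈ Finset.Icc 1 N, a k * e k x) :
    ∫ x in (0:ℝ)..l, (-γ) * u x * deriv u x * e 1 x
      = (γ * Real.pi / (Real.sqrt 2 * l ^ ((3:ℝ)/2)))
        * ∑ j ∈ Finset.Icc 1 (N - 1), a j * a (j + 1) :=
  burgers_projection_first_mode_general l γ hl N a e he u hu
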